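/- arXiv:2105.12498 — 3 statements merged into one kernel-verified Lean document; each statement's English description precedes it below -/
import Mathlib

section
/- Strong necessitation for knowledge: if a set of formulas T derives γ in the axiomatic system Ax of PTEL, then for every agent a, the set K_a T = {K_a α : α ∈ T} derives K_a γ in Ax. -/
namespace PTEL

/-- Formulas of the probabilistic temporal epistemic logic PTEL with `m` agents
(agents are `Fin m`).  Propositional letters are `atom n` (`n : ℕ`) together with
the special letters `act a` (the letter `A_a`, "agent `a` is active"). -/
inductive Frm (m : ℕ) : Type where
  | atom   : ℕ → Frm m
  | act    : Fin m → Frm m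
  | neg    : Frm m → Frm m
  | and    : Frm m → Frm m → Frm m
  | next   : Frm m → Frm m
  | until  : Frm m → Frm m → Frm m
  | prev   : Frm m → Frm m
  | since  : Frm m → Frm m → Frm m
  | know   : Fin m → Frm m → Frm m
  | common : Frm m → Frm m
  | pge    : ℚ → Frm m → Frm m            -- P_{≥ s} α
  | page   : Fin m → ℚ → Frm m → Frm m    -- P_{a, ≥ s} α

namespace Frm

variable {m : ℕ}

/-- `α → β` defined classically as `¬(α ∧ ¬β)`. -/
def imp (α β : Frm m) : Frm m := Frm.neg (Frm.and α (Frm.neg β))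

/-- `α ∨ β` defined classically. -/
def orf (α β : Frm m) : Frm m := Frm.neg (Frm.and (Frm.neg α) (Frm.neg β))

/-- `α ↔ β`. -/
def ifff (α β : Frm m) : Frm m := Frm.and (imp α β) (imp β α)

/-- A fixed tautology `⊤`. -/
def verum : Frm m := imp (Frm.atom 0) (Frm.atom 0)

/-- `◯^n α`. -/
def nextPow : ℕ → Frm m → Frm m
  | 0, α => α
  | n + 1, α => Frm.next (nextPow n α)

/-- `●^n α`. -/
def prevPow : ℕ → Frm m → Frm m
  | 0, α => α
  | n + 1, α => Frm.prev (prevPow n α)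

/-- `⋀_{l=0}^{n-1} f l` (the empty conjunction is `⊤`). -/
def conjBelow (f : ℕ → Frm m) : ℕ → Frm m
  | 0 => verum
  | n + 1 => Frm.and (conjBelow f n) (f n)

/-- `G α = ⋀_{a ∈ Agents} K_a α` (everybody knows). -/
def ek (α : Frm m) : Frm m :=
  (List.finRange m).foldr (fun a acc => Frm.and (Frm.know a α) acc) verum

/-- `G^n α` where `G^0 α = α` and `G^{n+1} α = G (G^n α)`. -/
def ekPow : ℕ → Frm m → Frm m
  | 0, α => α
  | n + 1, α => ek (ekPow n α)

/-- `◇ α = (α → α) U α`. -/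
def sometime (α : Frm m) : Frm m := Frm.until (imp α α) α

/-- `□ α = ¬ ◇ ¬ α`. -/
def always (α : Frm m) : Frm m := Frm.neg (sometime (Frm.neg α))

/-- `P_{< s} α  =  ¬ P_{≥ s} α`. -/
def plt (s : ℚ) (α : Frm m) : Frm m := Frm.neg (Frm.pge s α)

/-- `P_{≤ s} α  =  P_{≥ 1-s} ¬α`. -/
def ple (s : ℚ) (α : Frm m) : Frm m := Frm.pge (1 - s) (Frm.neg α)

/-- `P_{a, < s} α  =  ¬ P_{a, ≥ s} α`. -/
def palt (a : Fin m) (s : ℚ) (α : Frm m) : Frm m := Frm.neg (Frm.page a s α)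

/-- `P_{a, ≤ s} α  =  P_{a, ≥ 1-s} ¬α`. -/
def pale (a : Fin m) (s : ℚ) (α : Frm m) : Frm m := Frm.page a (1 - s) (Frm.neg α)

end Frm

/-- The unary operators `K_a`, `◯`, `●` used in `k`-nested implications. -/
inductive Op (m : ℕ) : Type where
  | know : Fin m → Op m
  | next : Op m
  | prev : Op m

def Op.app {m : ℕ} : Op m → Frm m → Frm m
  | .know a, α => Frm.know a α
  | .next, α => Frm.next α
  | .prev, α => Frm.prev α

/-- The `k`-nested implication `Φ_{k,B,X}(τ)`.  Here `β0` is the innermost formula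
`β_0`, and `L = [(β_k, X_k), (β_{k-1}, X_{k-1}), …, (β_1, X_1)]` lists the remaining
formulas of `B` paired with the operators of `X`, from the outermost inwards:
`Φ_{0,(β_0),()}(τ) = β_0 → τ` and
`Φ_{k,B,X}(τ) = β_k → X_k Φ_{k-1,(β_0,…,β_{k-1}),(X_1,…,X_{k-1})}(τ)` for `k ≥ 1`. -/
def KNI {m : ℕ} (β0 : Frm m) : List (Frm m × Op m) → Frm m → Frm m
  | [], τ => Frm.imp β0 τ
  | p :: L, τ => Frm.imp p.1 (Op.app p.2 (KNI β0 L τ))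

/-- Instances of classical propositional tautologies: formulas true under every
Boolean valuation that respects `¬` and `∧`. -/
def IsTautology {m : ℕ} (φ : Frm m) : Prop :=
  ∀ v : Frm m → Bool,
    (∀ α, v (Frm.neg α) = !(v α)) →
    (∀ α β, v (Frm.and α β) = (v α && v β)) →
    v φ = true

/-- `q ∈ [0,1] ∩ ℚ`. -/
def InUnit (q : ℚ) : Prop := 0 ≤ q ∧ q ≤ 1

/-- Derivability in the axiomatic system `Ax` of PTEL.  Premises of the
necessitation rules must be theorems (derivable from `∅`); the rules
`ruleUntil`, `ruleSince`, `ruleCommon`, `ruleArch`, `ruleArchA` are the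
infinitary rules RU, RS, RC, RGA, RA formulated via `k`-nested implications. -/
inductive Deriv {m : ℕ} : Set (Frm m) → Frm m → Prop where
  -- I. propositional part
  | hyp {T : Set (Frm m)} {φ} (h : φ ∈ T) : Deriv T φ
  | tauto {T : Set (Frm m)} {φ} (h : IsTautology φ) : Deriv T φ
  | mp {T : Set (Frm m)} {φ ψ} (h1 : Deriv T (Frm.imp φ ψ)) (h2 : Deriv T φ) : Deriv T ψ
  -- II. temporal axioms and rules
  | axNextNeg {T : Set (Frm m)} (α) :
      Deriv T (Frm.ifff (Frm.neg (Frm.next α)) (Frm.next (Frm.neg α)))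
  | axNextImp {T : Set (Frm m)} (α β) :
      Deriv T (Frm.imp (Frm.next (Frm.imp α β)) (Frm.imp (Frm.next α) (Frm.next β)))
  | axUntilNext {T : Set (Frm m)} (α β) :
      Deriv T (Frm.ifff (Frm.until α β)
        (Frm.orf β (Frm.and α (Frm.next (Frm.until α β)))))
  | axUntilSometime {T : Set (Frm m)} (α β) :
      Deriv T (Frm.imp (Frm.until α β) (Frm.sometime β))
  | axPrevNeg {T : Set (Frm m)} (α) :
      Deriv T (Frm.imp (Frm.neg (Frm.prev (Frm.neg α))) (Frm.prev α))
  | axPrevImp {T : Set (Frm m)} (α β) :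
      Deriv T (Frm.imp (Frm.prev (Frm.imp α β)) (Frm.imp (Frm.prev α) (Frm.prev β)))
  | axPrevAnd {T : Set (Frm m)} (α β) :
      Deriv T (Frm.imp (Frm.and (Frm.prev α) (Frm.prev β)) (Frm.prev (Frm.and α β)))
  | axNextPrev {T : Set (Frm m)} (α) :
      Deriv T (Frm.ifff (Frm.next (Frm.prev α)) α)
  | axNextPrevC1 {T : Set (Frm m)} (α) :
      Deriv T (Frm.imp (Frm.next (Frm.prev α)) (Frm.prev (Frm.next α)))
  | axNextPrevC2 {T : Set (Frm m)} (α γ) :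
      Deriv T (Frm.imp (Frm.neg (Frm.prev (Frm.and γ (Frm.neg γ))))
        (Frm.ifff (Frm.next (Frm.prev α)) (Frm.prev (Frm.next α))))
  | axSincePrev {T : Set (Frm m)} (α β) :
      Deriv T (Frm.ifff (Frm.since α β)
        (Frm.orf β (Frm.and (Frm.neg (Frm.prev (Frm.and α (Frm.neg α))))
          (Frm.and α (Frm.prev (Frm.since α β))))))
  | axOncePrev {T : Set (Frm m)} (β) :
      Deriv T (Frm.since (Frm.imp (Frm.prev β) (Frm.prev β)) (Frm.prev β))
  | ruleNextNec {T : Set (Frm m)} {α} (h : Deriv ∅ α) : Deriv T (Frm.next α)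
  | rulePrevNec {T : Set (Frm m)} {α} (h : Deriv ∅ α) : Deriv T (Frm.prev α)
  | ruleUntil {T : Set (Frm m)} {β0 : Frm m} {L : List (Frm m × Op m)} {α β : Frm m}
      (h : ∀ i : ℕ, Deriv T (KNI β0 L (Frm.neg
        (Frm.and (Frm.conjBelow (fun l => Frm.nextPow l α) i) (Frm.nextPow i β))))) :
      Deriv T (KNI β0 L (Frm.neg (Frm.until α β)))
  | ruleSince {T : Set (Frm m)} {β0 : Frm m} {L : List (Frm m × Op m)} {α β : Frm m}
      (h : ∀ i : ℕ, Deriv T (KNI β0 L (Frm.neg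
        (Frm.and (Frm.conjBelow (fun l => Frm.prevPow l α) i)
          (Frm.and (Frm.conjBelow (fun l => Frm.neg (Frm.prevPow l (Frm.and α (Frm.neg α)))) (i + 1))
            (Frm.prevPow i β)))))) :
      Deriv T (KNI β0 L (Frm.neg (Frm.since α β)))
  -- III. epistemic axioms and rules
  | axKImp {T : Set (Frm m)} (a : Fin m) (α β) :
      Deriv T (Frm.imp (Frm.know a (Frm.imp α β)) (Frm.imp (Frm.know a α) (Frm.know a β)))
  | axKRefl {T : Set (Frm m)} (a : Fin m) (α) :
      Deriv T (Frm.imp (Frm.act a) (Frm.imp (Frm.know a α) α))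
  | axKAware {T : Set (Frm m)} (a : Fin m) :
      Deriv T (Frm.imp (Frm.act a) (Frm.know a (Frm.act a)))
  | axKDead {T : Set (Frm m)} (a : Fin m) (α) :
      Deriv T (Frm.imp (Frm.neg (Frm.act a)) (Frm.know a (Frm.and α (Frm.neg α))))
  | axKSymm {T : Set (Frm m)} (a : Fin m) (α) :
      Deriv T (Frm.imp (Frm.know a (Frm.neg α)) (Frm.know a (Frm.neg (Frm.know a α))))
  | axKTrans {T : Set (Frm m)} (a : Fin m) (α) :
      Deriv T (Frm.imp (Frm.know a α) (Frm.know a (Frm.know a α)))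
  | axCommon {T : Set (Frm m)} (α) (n : ℕ) :
      Deriv T (Frm.imp (Frm.common α) (Frm.ekPow n α))
  | ruleKNec {T : Set (Frm m)} (a : Fin m) {α} (h : Deriv ∅ α) : Deriv T (Frm.know a α)
  | ruleCommon {T : Set (Frm m)} {β0 : Frm m} {L : List (Frm m × Op m)} {α : Frm m}
      (h : ∀ i : ℕ, Deriv T (KNI β0 L (Frm.ekPow i α))) :
      Deriv T (KNI β0 L (Frm.common α))
  -- IV. probabilities on runs
  | axPge0 {T : Set (Frm m)} (α) : Deriv T (Frm.pge 0 α)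
  | axPleLt {T : Set (Frm m)} (α) {r t : ℚ} (hr : InUnit r) (ht : InUnit t) (h : r < t) :
      Deriv T (Frm.imp (Frm.ple r α) (Frm.plt t α))
  | axPltLe {T : Set (Frm m)} (α) {t : ℚ} (ht : InUnit t) :
      Deriv T (Frm.imp (Frm.plt t α) (Frm.ple t α))
  | axPAdd {T : Set (Frm m)} (α β) {r t : ℚ} (hr : InUnit r) (ht : InUnit t) :
      Deriv T (Frm.imp
        (Frm.and (Frm.pge r α) (Frm.and (Frm.pge t β) (Frm.pge 1 (Frm.neg (Frm.and α β)))))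
        (Frm.pge (min 1 (r + t)) (Frm.orf α β)))
  | axPAdd2 {T : Set (Frm m)} (α β) {r t : ℚ} (hr : InUnit r) (ht : InUnit t)
      (h : r + t ≤ 1) :
      Deriv T (Frm.imp (Frm.and (Frm.ple r α) (Frm.plt t α)) (Frm.plt (r + t) (Frm.orf α β)))
  | axPPrev {T : Set (Frm m)} (α) :
      Deriv T (Frm.pge 1 (Frm.prev (Frm.and α (Frm.neg α))))
  | rulePNec {T : Set (Frm m)} {α} (h : Deriv ∅ α) : Deriv T (Frm.pge 1 α)
  | ruleArch {T : Set (Frm m)} {β0 : Frm m} {L : List (Frm m × Op m)} {α : Frm m} {r : ℚ}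
      (hr0 : 0 < r) (hr1 : r ≤ 1)
      (h : ∀ i : ℕ, 1 / r ≤ (i : ℚ) → Deriv T (KNI β0 L (Frm.pge (r - 1 / (i : ℚ)) α))) :
      Deriv T (KNI β0 L (Frm.pge r α))
  -- V. probabilities on possible worlds
  | axPAge0 {T : Set (Frm m)} (a : Fin m) (α) : Deriv T (Frm.page a 0 α)
  | axPALeLt {T : Set (Frm m)} (a : Fin m) (α) {r t : ℚ} (hr : InUnit r) (ht : InUnit t)
      (h : r < t) :
      Deriv T (Frm.imp (Frm.pale a r α) (Frm.palt a t α))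
  | axPALtLe {T : Set (Frm m)} (a : Fin m) (α) {t : ℚ} (ht : InUnit t) :
      Deriv T (Frm.imp (Frm.palt a t α) (Frm.pale a t α))
  | axPAAdd {T : Set (Frm m)} (a : Fin m) (α β) {r t : ℚ} (hr : InUnit r) (ht : InUnit t) :
      Deriv T (Frm.imp
        (Frm.and (Frm.page a r α)
          (Frm.and (Frm.page a t β) (Frm.page a 1 (Frm.neg (Frm.and α β)))))
        (Frm.page a (min 1 (r + t)) (Frm.orf α β)))
  | axPAAdd2 {T : Set (Frm m)} (a : Fin m) (α β) {r t : ℚ} (hr : InUnit r) (ht : InUnit t)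
      (h : r + t ≤ 1) :
      Deriv T (Frm.imp (Frm.and (Frm.pale a r α) (Frm.palt a t α))
        (Frm.palt a (r + t) (Frm.orf α β)))
  | rulePANec {T : Set (Frm m)} (a : Fin m) {α} (h : Deriv ∅ α) : Deriv T (Frm.page a 1 α)
  | ruleArchA {T : Set (Frm m)} (a : Fin m) {β0 : Frm m} {L : List (Frm m × Op m)}
      {α : Frm m} {r : ℚ} (hr0 : 0 < r) (hr1 : r ≤ 1)
      (h : ∀ i : ℕ, 1 / r ≤ (i : ℚ) →
        Deriv T (KNI β0 L (Frm.page a (r - 1 / (i : ℚ)) α))) :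
      Deriv T (KNI β0 L (Frm.page a r α))

/-- A theory is inconsistent if it derives every formula. -/
def Inconsistent {m : ℕ} (T : Set (Frm m)) : Prop := ∀ φ : Frm m, Deriv T φ

def Consistent {m : ℕ} (T : Set (Frm m)) : Prop := ¬ Inconsistent T

def MaximalConsistent {m : ℕ} (T : Set (Frm m)) : Prop :=
  Consistent T ∧ ∀ S : Set (Frm m), T ⊂ S → ¬ Consistent S

/-! ### Semantics -/

/-- A run assigns to each moment the set of propositional letters true at it
(`Sum.inl n` is the letter `atom n`, `Sum.inr a` is the letter `A_a`). -/
abbrev Run (m : ℕ) : Type := ℕ → Set (ℕ ⊕ Fin m)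

/-- A finitely additive probability measure defined on an algebra of subsets of `X`. -/
structure FinAddProb (X : Type) where
  sets : Set (Set X)
  univ_mem : Set.univ ∈ sets
  compl_mem : ∀ A ∈ sets, Aᶜ ∈ sets
  union_mem : ∀ A ∈ sets, ∀ B ∈ sets, A ∪ B ∈ sets
  mu : Set X → ℝ
  mu_nonneg : ∀ A ∈ sets, 0 ≤ mu A
  mu_univ : mu Set.univ = 1
  mu_add : ∀ A ∈ sets, ∀ B ∈ sets, Disjoint A B → mu (A ∪ B) = mu A + mu B

/-- A finitely additive probability space on a nonempty subset (`carrier`) of `X`,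
with an algebra of subsets of the carrier. -/
structure SubFinAddProb (X : Type) where
  carrier : Set X
  carrier_nonempty : carrier.Nonempty
  sets : Set (Set X)
  sets_sub : ∀ A ∈ sets, A ⊆ carrier
  carrier_mem : carrier ∈ sets
  compl_mem : ∀ A ∈ sets, carrier \ A ∈ sets
  union_mem : ∀ A ∈ sets, ∀ B ∈ sets, A ∪ B ∈ sets
  mu : Set X → ℝ
  mu_nonneg : ∀ A ∈ sets, 0 ≤ mu A
  mu_carrier : mu carrier = 1
  mu_add : ∀ A ∈ sets, ∀ B ∈ sets, Disjoint A B → mu (A ∪ B) = mu A + mu B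

/-- A PTEL Kripke model. -/
structure Model (m : ℕ) where
  runs : Set (Run m)
  runs_nonempty : runs.Nonempty
  /-- epistemic accessibility relations on possible worlds (pairs run/time) -/
  acc : Fin m → (↥runs × ℕ) → (↥runs × ℕ) → Prop
  acc_symm : ∀ a w w', acc a w w' → acc a w' w
  acc_trans : ∀ a w w' w'', acc a w w' → acc a w' w'' → acc a w w''
  /-- agent `a` is inactive at `w` iff no world is accessible from `w` -/
  inactive_iff : ∀ (a : Fin m) (w : ↥runs × ℕ),
    Sum.inr a ∉ w.1.1 w.2 ↔ ∀ w', ¬ acc a w w'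
  /-- accessibility is reflexive at worlds where the agent is active -/
  acc_refl : ∀ (a : Fin m) (w : ↥runs × ℕ), Sum.inr a ∈ w.1.1 w.2 → acc a w w
  /-- the probability on runs associated to each possible world -/
  runProb : (↥runs × ℕ) → FinAddProb ↥runs
  /-- the agents' probability spaces on possible worlds -/
  agentProb : Fin m → (↥runs × ℕ) → SubFinAddProb (↥runs × ℕ)

abbrev Model.World {m : ℕ} (M : Model m) : Type := ↥M.runs × ℕ

/-- Satisfaction of a formula at a possible world of a model.  Common knowledge is
interpreted via reachability (the equivalent formulation of `(r,n) ⊨ C β`). -/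
def Sat {m : ℕ} (M : Model m) : Frm m → M.World → Prop
  | .atom n, w => Sum.inl n ∈ w.1.1 w.2
  | .act a, w => Sum.inr a ∈ w.1.1 w.2
  | .neg α, w => ¬ Sat M α w
  | .and α β, w => Sat M α w ∧ Sat M β w
  | .next α, w => Sat M α (w.1, w.2 + 1)
  | .until α β, w => ∃ j, w.2 ≤ j ∧ Sat M β (w.1, j) ∧
      ∀ k, w.2 ≤ k → k < j → Sat M α (w.1, k)
  | .prev α, w => w.2 = 0 ∨ ∃ n, w.2 = n + 1 ∧ Sat M α (w.1, n)
  | .since α β, w => ∃ j, j ≤ w.2 ∧ Sat M β (w.1, j) ∧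
      ∀ k, j < k → k ≤ w.2 → Sat M α (w.1, k)
  | .know a α, w => ∀ w', M.acc a w w' → Sat M α w'
  | .common α, w => ∀ w', Relation.ReflTransGen (fun u v => ∃ a, M.acc a u v) w w' →
      Sat M α w'
  | .pge s α, w => (s : ℝ) ≤ (M.runProb w).mu {r : ↥M.runs | Sat M α (r, 0)}
  | .page a s α, w => (s : ℝ) ≤ (M.agentProb a w).mu
      {w' : M.World | w' ∈ (M.agentProb a w).carrier ∧ Sat M α w'}

/-- A model is measurable if all definable sets of runs / of possible worlds are
measurable. -/
def Model.Measurable {m : ℕ} (M : Model m) : Prop :=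
  ∀ (β : Frm m) (w : M.World),
    {r : ↥M.runs | Sat M β (r, 0)} ∈ (M.runProb w).sets ∧
    ∀ a : Fin m,
      {w' : M.World | w' ∈ (M.agentProb a w).carrier ∧ Sat M β w'} ∈ (M.agentProb a w).sets

/-- A set of formulas is satisfiable if it holds at a possible world of some
measurable model. -/
def SatisfiableSet {m : ℕ} (T : Set (Frm m)) : Prop :=
  ∃ M : Model m, M.Measurable ∧ ∃ w : M.World, ∀ φ ∈ T, Sat M φ w

end PTEL

namespace PTEL

/-! Induction on the derivation of `γ`. Hypotheses become hypotheses of `K_a T`, Modus Ponens is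
transported by the distribution axiom, and every rule without premises from `T` yields a theorem,
which `K_a`-necessitation turns into `K_a γ`. For the infinitary rules, `⊤ → K_a Φ_{k,B,X}(τ)` is
itself a `(k+1)`-nested implication, so the same rule applies one nesting level deeper. -/

variable {m : ℕ} {T : Set (Frm m)}

theorem isTautology_verum : IsTautology (Frm.verum : Frm m) := by
  intro v hneg hand
  simp only [Frm.verum, Frm.imp, hneg, hand]
  cases v (Frm.atom 0) <;> rfl

theorem isTautology_imp_imp_verum (φ : Frm m) :
    IsTautology (Frm.imp φ (Frm.imp Frm.verum φ)) := by
  intro v hneg hand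
  simp only [Frm.imp, hneg, hand]
  cases v φ <;> cases v Frm.verum <;> rfl

theorem Deriv.kni_cons_of_know_kni {a : Fin m} {β0 τ : Frm m} {L : List (Frm m × Op m)}
    (h : Deriv T (Frm.know a (KNI β0 L τ))) :
    Deriv T (KNI β0 ((Frm.verum, .know a) :: L) τ) :=
  .mp (.tauto (isTautology_imp_imp_verum _)) h

theorem Deriv.know_kni_of_kni_cons {a : Fin m} {β0 τ : Frm m} {L : List (Frm m × Op m)}
    (h : Deriv T (KNI β0 ((Frm.verum, .know a) :: L) τ)) :
    Deriv T (Frm.know a (KNI β0 L τ)) :=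
  .mp h (.tauto isTautology_verum)

/-- **Strong necessitation for knowledge**: if `T ⊢ γ` then, for every agent `a`,
`K_a T ⊢ K_a γ`. -/
theorem strong_necessitation_know {m : ℕ} (T : Set (Frm m)) (γ : Frm m)
    (h : Deriv T γ) (a : Fin m) :
    Deriv (Frm.know a '' T) (Frm.know a γ) := by
  induction h with
  | hyp hmem => exact .hyp ⟨_, hmem, rfl⟩
  | mp _ _ ih₁ ih₂ => exact .mp (.mp (.axKImp a _ _) ih₁) ih₂
  | ruleUntil _ ih =>
    exact .know_kni_of_kni_cons (.ruleUntil fun i => (ih i).kni_cons_of_know_kni)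
  | ruleSince _ ih =>
    exact .know_kni_of_kni_cons (.ruleSince fun i => (ih i).kni_cons_of_know_kni)
  | ruleCommon _ ih =>
    exact .know_kni_of_kni_cons (.ruleCommon fun i => (ih i).kni_cons_of_know_kni)
  | ruleArch hr0 hr1 _ ih =>
    exact .know_kni_of_kni_cons (.ruleArch hr0 hr1 fun i hi => (ih i hi).kni_cons_of_know_kni)
  | ruleArchA b hr0 hr1 _ ih =>
    exact .know_kni_of_kni_cons (.ruleArchA b hr0 hr1 fun i hi => (ih i hi).kni_cons_of_know_kni)
  | _ => exact .ruleKNec a (by aesop (add 50% constructors Deriv))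

end PTEL
end

section
/- Witnesses' theorem for since: let T be an Ax-consistent set of PTEL formulas, k ∈ ℕ, B = (β_0,…,β_k) a sequence of formulas and X = (X_1,…,X_k) a sequence of operators from {K_a : a an agent} ∪ {◯, ●}. If T ∪ { Φ_{k,B,X}(¬(α S β)) } is inconsistent, then there exists i_0 ∈ ℕ such that T ∪ { ¬ Φ_{k,B,X}( ¬( (⋀_{l=0}^{i_0−1} ●^l α) ∧ (⋀_{l=0}^{i_0} ¬●^l(α ∧ ¬α)) ∧ ●^{i_0} β) ) } is consistent, where Φ_{k,B,X}(τ) denotes the k-nested implication defined by Φ_{0,B,X}(τ) = β_0 → τ and Φ_{k,B,X}(τ) = β_k → X_k Φ_{k−1,(β_0,…,β_{k−1}),(X_1,…,X_{k−1})}(τ) for k ≥ 1. -/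
/-! If every witness extension of `T` were inconsistent, the deduction theorem would make
every premise of the rule RS a theorem of `T`; RS then gives `T ⊢ Φ(¬(α S β))`, and the
inconsistency of `T ∪ {Φ(¬(α S β))}` passes to `T`. The deduction theorem survives the
infinitary rules because `θ → Φ(τ)` is again a `k`-nested implication, with `θ` conjoined
to its outermost antecedent. -/

namespace PTEL

section Hilbert

variable {m : ℕ}

lemma isTautology_imp_self (φ : Frm m) : IsTautology (Frm.imp φ φ) := by
  intro v hn ha
  simp only [Frm.imp, hn, ha]
  cases v φ <;> rfl

lemma isTautology_imp_intro (θ φ : Frm m) : IsTautology (Frm.imp φ (Frm.imp θ φ)) := by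
  intro v hn ha
  simp only [Frm.imp, hn, ha]
  cases v φ <;> cases v θ <;> rfl

lemma isTautology_imp_imp_distrib (θ φ ψ : Frm m) :
    IsTautology (Frm.imp (Frm.imp θ (Frm.imp φ ψ)) (Frm.imp (Frm.imp θ φ) (Frm.imp θ ψ))) := by
  intro v hn ha
  simp only [Frm.imp, hn, ha]
  cases v θ <;> cases v φ <;> cases v ψ <;> rfl

lemma isTautology_not_imp_self (φ : Frm m) :
    IsTautology (Frm.imp (Frm.imp (Frm.neg φ) φ) φ) := by
  intro v hn ha
  simp only [Frm.imp, hn, ha]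
  cases v φ <;> rfl

lemma isTautology_curry (θ φ ψ : Frm m) :
    IsTautology (Frm.imp (Frm.imp (Frm.and θ φ) ψ) (Frm.imp θ (Frm.imp φ ψ))) := by
  intro v hn ha
  simp only [Frm.imp, hn, ha]
  cases v θ <;> cases v φ <;> cases v ψ <;> rfl

lemma isTautology_uncurry (θ φ ψ : Frm m) :
    IsTautology (Frm.imp (Frm.imp θ (Frm.imp φ ψ)) (Frm.imp (Frm.and θ φ) ψ)) := by
  intro v hn ha
  simp only [Frm.imp, hn, ha]
  cases v θ <;> cases v φ <;> cases v ψ <;> rfl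

lemma Deriv.mp_tautology {T : Set (Frm m)} {φ ψ : Frm m} (hφψ : IsTautology (Frm.imp φ ψ))
    (hφ : Deriv T φ) : Deriv T ψ :=
  Deriv.mp (Deriv.tauto hφψ) hφ

lemma Deriv.imp_intro {T : Set (Frm m)} (θ : Frm m) {φ : Frm m} (h : Deriv T φ) :
    Deriv T (Frm.imp θ φ) :=
  h.mp_tautology (isTautology_imp_intro θ φ)

lemma exists_deriv_KNI_iff_deriv_imp_KNI (θ β0 : Frm m) (L : List (Frm m × Op m)) :
    ∃ (β0' : Frm m) (L' : List (Frm m × Op m)), ∀ (T : Set (Frm m)) (τ : Frm m),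
      Deriv T (KNI β0' L' τ) ↔ Deriv T (Frm.imp θ (KNI β0 L τ)) := by
  cases L with
  | nil =>
    exact ⟨Frm.and θ β0, [], fun _ τ =>
      ⟨(·.mp_tautology (isTautology_curry θ β0 τ)),
        (·.mp_tautology (isTautology_uncurry θ β0 τ))⟩⟩
  | cons p L =>
    exact ⟨β0, (Frm.and θ p.1, p.2) :: L, fun _ τ =>
      ⟨(·.mp_tautology (isTautology_curry θ p.1 _)),
        (·.mp_tautology (isTautology_uncurry θ p.1 _))⟩⟩

theorem Deriv.deduction {T : Set (Frm m)} {θ φ : Frm m} (h : Deriv (insert θ T) φ) :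
    Deriv T (Frm.imp θ φ) := by
  suffices ∀ S ψ, Deriv S ψ → S = insert θ T → Deriv T (Frm.imp θ ψ) from this _ _ h rfl
  intro S ψ h
  induction h with
  | hyp hψ =>
    rintro rfl
    rcases Set.mem_insert_iff.mp hψ with rfl | hψ
    · exact Deriv.tauto (isTautology_imp_self _)
    · exact (Deriv.hyp hψ).imp_intro θ
  | mp _ _ ih₁ ih₂ =>
    intro hS
    exact ((ih₁ hS).mp_tautology (isTautology_imp_imp_distrib _ _ _)).mp (ih₂ hS)
  | @ruleUntil _ β0 L _ _ _ ih =>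
    obtain ⟨β0', L', hiff⟩ := exists_deriv_KNI_iff_deriv_imp_KNI θ β0 L
    exact fun hS => (hiff _ _).mp (Deriv.ruleUntil fun i => (hiff _ _).mpr (ih i hS))
  | @ruleSince _ β0 L _ _ _ ih =>
    obtain ⟨β0', L', hiff⟩ := exists_deriv_KNI_iff_deriv_imp_KNI θ β0 L
    exact fun hS => (hiff _ _).mp (Deriv.ruleSince fun i => (hiff _ _).mpr (ih i hS))
  | @ruleCommon _ β0 L _ _ ih =>
    obtain ⟨β0', L', hiff⟩ := exists_deriv_KNI_iff_deriv_imp_KNI θ β0 L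
    exact fun hS => (hiff _ _).mp (Deriv.ruleCommon fun i => (hiff _ _).mpr (ih i hS))
  | @ruleArch _ β0 L _ _ hr0 hr1 _ ih =>
    obtain ⟨β0', L', hiff⟩ := exists_deriv_KNI_iff_deriv_imp_KNI θ β0 L
    exact fun hS => (hiff _ _).mp
      (Deriv.ruleArch hr0 hr1 fun i hi => (hiff _ _).mpr (ih i hi hS))
  | @ruleArchA _ a β0 L _ _ hr0 hr1 _ ih =>
    obtain ⟨β0', L', hiff⟩ := exists_deriv_KNI_iff_deriv_imp_KNI θ β0 L
    exact fun hS => (hiff _ _).mp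
      (Deriv.ruleArchA a hr0 hr1 fun i hi => (hiff _ _).mpr (ih i hi hS))
  -- the remaining rules are axioms or have premises derived from `∅`, so they apply in `T`
  | _ => exact fun _ => Deriv.imp_intro θ (by aesop (add 50% constructors Deriv))

lemma Deriv.of_not_consistent_insert_neg {T : Set (Frm m)} {φ : Frm m}
    (h : ¬ Consistent (insert (Frm.neg φ) T)) : Deriv T φ :=
  (Deriv.deduction (not_not.mp h φ)).mp_tautology (isTautology_not_imp_self φ)

lemma Consistent.insert_of_deriv {T : Set (Frm m)} {φ : Frm m} (hT : Consistent T)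
    (hφ : Deriv T φ) : Consistent (insert φ T) :=
  fun hinc => hT fun ψ => (Deriv.deduction (hinc ψ)).mp hφ

end Hilbert

/-- **Witnesses' theorem for `S`**: if `T` is consistent and
`T ∪ {Φ_{k,B,X}(¬(α S β))}` is inconsistent, then for some `i₀`
`T ∪ {¬Φ_{k,B,X}(¬((⋀_{l<i₀} ●^l α) ∧ (⋀_{l≤i₀} ¬●^l(α∧¬α)) ∧ ●^{i₀} β))}`
is consistent. -/
theorem witnesses_since {m : ℕ} (T : Set (Frm m)) (hT : Consistent T)
    (β0 : Frm m) (L : List (Frm m × Op m)) (α β : Frm m)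
    (h : ¬ Consistent (insert (KNI β0 L (Frm.neg (Frm.since α β))) T)) :
    ∃ i0 : ℕ, Consistent (insert
      (Frm.neg (KNI β0 L (Frm.neg
        (Frm.and (Frm.conjBelow (fun l => Frm.prevPow l α) i0)
          (Frm.and
            (Frm.conjBelow (fun l => Frm.neg (Frm.prevPow l (Frm.and α (Frm.neg α)))) (i0 + 1))
            (Frm.prevPow i0 β)))))) T) := by
  by_contra! hwitness
  exact h (hT.insert_of_deriv
    (Deriv.ruleSince fun i => Deriv.of_not_consistent_insert_neg (hwitness i)))

end PTEL
end

section
/- Witnesses' theorem for common knowledge: let T be an Ax-consistent set of PTEL formulas, k ∈ ℕ, B = (β_0,…,β_k) a sequence of formulas and X = (X_1,…,X_k) a sequence of operators from {K_a : a an agent} ∪ {◯, ●}. If T ∪ { Φ_{k,B,X}(C α) } is inconsistent, then there exists i_0 ∈ ℕ such that T ∪ { ¬ Φ_{k,B,X}(G^{i_0} α) } is consistent, where G α abbreviates ⋀_{a ∈ A} K_a α, G^0 α = α, G^{n+1} α = G G^n α, and Φ_{k,B,X}(τ) denotes the k-nested implication defined by Φ_{0,B,X}(τ) = β_0 → τ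 and Φ_{k,B,X}(τ) = β_k → X_k Φ_{k−1,(β_0,…,β_{k−1}),(X_1,…,X_{k−1})}(τ) for k ≥ 1. -/
/-! Every infinitary rule of `Ax` is stated under an arbitrary `k`-nested implication, and
`φ → Φ_{k,B,X}(τ)` is propositionally equivalent, uniformly in `τ`, to the `k`-nested implication
obtained by replacing `β_k` with `φ ∧ β_k`. So the rules survive prefixing a hypothesis and the
deduction theorem holds for `Ax`. If every `T ∪ {¬Φ(G^i α)}` were inconsistent, `T` would derive
every `Φ(G^i α)`, hence `Φ(C α)` by RC, and the inconsistency of `T ∪ {Φ(C α)}` would pass to `T`. -/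

namespace PTEL

variable {m : ℕ}

section Tautologies

variable (a b c : Frm m)

lemma isTautology_imp_self_s6 : IsTautology (Frm.imp a a) := by
  intro v hn ha
  simp only [Frm.imp, hn, ha]
  cases v a <;> rfl

lemma isTautology_imp_intro_s6 : IsTautology (Frm.imp b (Frm.imp a b)) := by
  intro v hn ha
  simp only [Frm.imp, hn, ha]
  cases v a <;> cases v b <;> rfl

lemma isTautology_imp_imp_distrib_s6 :
    IsTautology (Frm.imp (Frm.imp a (Frm.imp b c))
      (Frm.imp (Frm.imp a b) (Frm.imp a c))) := by
  intro v hn ha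
  simp only [Frm.imp, hn, ha]
  cases v a <;> cases v b <;> cases v c <;> rfl

lemma isTautology_uncurry_s6 :
    IsTautology (Frm.imp (Frm.imp a (Frm.imp b c)) (Frm.imp (Frm.and a b) c)) := by
  intro v hn ha
  simp only [Frm.imp, hn, ha]
  cases v a <;> cases v b <;> cases v c <;> rfl

lemma isTautology_curry_s6 :
    IsTautology (Frm.imp (Frm.imp (Frm.and a b) c) (Frm.imp a (Frm.imp b c))) := by
  intro v hn ha
  simp only [Frm.imp, hn, ha]
  cases v a <;> cases v b <;> cases v c <;> rfl

lemma isTautology_not_imp_self_s6 : IsTautology (Frm.imp (Frm.imp (Frm.neg a) a) a) := by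
  intro v hn ha
  simp only [Frm.imp, hn, ha]
  cases v a <;> rfl

end Tautologies

lemma exists_kni_equiv_imp_kni (φ β0 : Frm m) (L : List (Frm m × Op m)) :
    ∃ (β0' : Frm m) (L' : List (Frm m × Op m)), ∀ (T : Set (Frm m)) (τ : Frm m),
      Deriv T (Frm.imp (Frm.imp φ (KNI β0 L τ)) (KNI β0' L' τ)) ∧
      Deriv T (Frm.imp (KNI β0' L' τ) (Frm.imp φ (KNI β0 L τ))) := by
  cases L with
  | nil =>
    exact ⟨Frm.and φ β0, [], fun _ τ =>
      ⟨.tauto (isTautology_uncurry_s6 φ β0 τ), .tauto (isTautology_curry_s6 φ β0 τ)⟩⟩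
  | cons p L =>
    exact ⟨β0, (Frm.and φ p.1, p.2) :: L, fun _ τ =>
      ⟨.tauto (isTautology_uncurry_s6 φ p.1 _), .tauto (isTautology_curry_s6 φ p.1 _)⟩⟩

namespace Deriv

variable {T : Set (Frm m)}

lemma imp_intro_s6 {φ ψ : Frm m} (h : Deriv T ψ) : Deriv T (Frm.imp φ ψ) :=
  mp (tauto (isTautology_imp_intro_s6 φ ψ)) h

lemma imp_kni_of_rule {ι : Sort*} {τ : ι → Frm m} {σ : Frm m}
    (rule : ∀ β0 L, (∀ i, Deriv T (KNI β0 L (τ i))) → Deriv T (KNI β0 L σ))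
    {φ β0 : Frm m} {L : List (Frm m × Op m)}
    (h : ∀ i, Deriv T (Frm.imp φ (KNI β0 L (τ i)))) :
    Deriv T (Frm.imp φ (KNI β0 L σ)) := by
  obtain ⟨β0', L', hequiv⟩ := exists_kni_equiv_imp_kni φ β0 L
  exact mp (hequiv T σ).2 (rule β0' L' fun i => mp (hequiv T (τ i)).1 (h i))

theorem imp_of_insert {φ ψ : Frm m} (h : Deriv (insert φ T) ψ) : Deriv T (Frm.imp φ ψ) := by
  generalize hS : insert φ T = S at h
  induction h generalizing T with
  | @hyp _ χ hχ =>
    subst hS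
    rcases Set.mem_insert_iff.mp hχ with rfl | hχ
    · exact tauto (isTautology_imp_self_s6 χ)
    · exact imp_intro_s6 (hyp hχ)
  | mp _ _ ih₁ ih₂ =>
    exact mp (mp (tauto (isTautology_imp_imp_distrib_s6 _ _ _)) (ih₁ hS)) (ih₂ hS)
  | ruleUntil _ ih => exact imp_kni_of_rule (fun _ _ => ruleUntil) fun i => ih i hS
  | ruleSince _ ih => exact imp_kni_of_rule (fun _ _ => ruleSince) fun i => ih i hS
  | ruleCommon _ ih => exact imp_kni_of_rule (fun _ _ => ruleCommon) fun i => ih i hS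
  | ruleArch hr0 hr1 _ ih =>
    exact imp_kni_of_rule (ι := {i : ℕ // _})
      (fun _ _ h => ruleArch hr0 hr1 fun i hi => h ⟨i, hi⟩) fun i => ih i.1 i.2 hS
  | ruleArchA a hr0 hr1 _ ih =>
    exact imp_kni_of_rule (ι := {i : ℕ // _})
      (fun _ _ h => ruleArchA a hr0 hr1 fun i hi => h ⟨i, hi⟩) fun i => ih i.1 i.2 hS
  | _ =>
    -- axioms and necessitation rules: they hold over `T` as well
    apply imp_intro_s6
    aesop (add 50% constructors Deriv)

lemma of_inconsistent_insert_neg {φ : Frm m} (h : Inconsistent (insert (Frm.neg φ) T)) :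
    Deriv T φ :=
  mp (tauto (isTautology_not_imp_self_s6 φ)) (imp_of_insert (h φ))

end Deriv

lemma Inconsistent.of_insert {T : Set (Frm m)} {φ : Frm m} (h : Inconsistent (insert φ T))
    (hφ : Deriv T φ) : Inconsistent T :=
  fun ψ => Deriv.mp (Deriv.imp_of_insert (h ψ)) hφ

/-- **Witnesses' theorem for common knowledge**: if `T` is consistent and
`T ∪ {Φ_{k,B,X}(C α)}` is inconsistent, then for some `i₀`
`T ∪ {¬Φ_{k,B,X}(G^{i₀} α)}` is consistent. -/
theorem witnesses_common {m : ℕ} (T : Set (Frm m)) (hT : Consistent T)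
    (β0 : Frm m) (L : List (Frm m × Op m)) (α : Frm m)
    (h : ¬ Consistent (insert (KNI β0 L (Frm.common α)) T)) :
    ∃ i0 : ℕ, Consistent (insert (Frm.neg (KNI β0 L (Frm.ekPow i0 α))) T) := by
  by_contra! hno
  have hG : ∀ i, Deriv T (KNI β0 L (Frm.ekPow i α)) := fun i =>
    Deriv.of_inconsistent_insert_neg (not_not.mp (hno i))
  exact hT ((not_not.mp h).of_insert (Deriv.ruleCommon hG))

end PTEL
end
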